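/- arXiv:2604.08394 — 2 statements merged into one kernel-verified Lean document; each statement's English description precedes it below -/
import Mathlib

section
/- Let F be a family of finite posets, closed under isomorphism and under taking ideals and filters, such that for every poset P in F the coefficient of n^1 in the order polynomial Ω_P(n) is nonnegative. Then for every P in F, every subposet A ⊆ P with min(P) ∪ max(P) ⊆ A, and every natural labeling A = {a_0, a_1, …, a_r}, there exists a polynomial f ∈ ℚ[t_1, …, t_r] all of whose coefficients are nonnegative such that Ω_{P,A}(λ) = f(λ(a_1) − λ(a_0), λ(a_2) − λ(a_1), …, λ(a_r) − λ(a_{r−1})) for every map λ : A → ℤ satisfying λ(a_0) ≤ λ(a_1) ≤ ⋯ ≤ λ(a_r). -/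
/-- The number of order preserving maps `λ̂ : α → ℤ` agreeing with `lam` on the
marked subset `A` (the lattice points of the marked order polytope `O_{P,A}(λ)`). -/
noncomputable def markedCount {α : Type} [PartialOrder α] (A : Set α) (lam : α → ℤ) : ℕ :=
  Nat.card {f : α → ℤ // Monotone f ∧ ∀ a ∈ A, f a = lam a}

/-- The number of order preserving maps from `α` into the `n`-chain `{1, …, n}`. -/
noncomputable def orderCount (α : Type) [PartialOrder α] (n : ℕ) : ℕ :=
  Nat.card {f : α → Fin n // Monotone f}

/-!
Splitting a monotone map `P → {1, …, m + n}` along the ideal `I` of points sent to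
`{1, …, m}` gives `Ω_P(m + n) = ∑_I Ω_I(m) Ω_{P \ I}(n)`. With `n = 1` this shows that `Ω_P` is a
polynomial; comparing linear coefficients in `n` gives `Ω_P' = ∑_I [n¹]Ω_{P \ I} · Ω_I`, so by
induction on `|P|` every coefficient of `Ω_P` is nonnegative as soon as the linear ones are.

An extension `λ̂` of `λ` is determined by the level of each point `p` (essentially the `j` with
`λ̂(p) ∈ (λ(a_{j-1}), λ(a_j)]`), a monotone map `τ : P → {0, …, r}` with `τ(a_j) = j`,
together with a monotone map of each block `{τ = i, p ≱ a_i}` into `(λ(a_{i-1}), λ(a_i)]`.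
Hence `Ω_{P,A}(λ) = ∑_τ ∏_i Ω_{Q_{τ,i}}(λ(a_i) - λ(a_{i-1}))`, and each block `Q_{τ,i}`, an
ideal of the filter `{τ ≥ i}`, belongs to the family.
-/

open Polynomial

section OrderCount

variable {β γ : Type} [PartialOrder β] [PartialOrder γ]

theorem orderCount_congr (e : β ≃o γ) (n : ℕ) : orderCount β n = orderCount γ n :=
  Nat.card_congr
    { toFun := fun f => ⟨f.1 ∘ e.symm, f.2.comp e.symm.monotone⟩
      invFun := fun g => ⟨g.1 ∘ e, g.2.comp e.monotone⟩
      left_inv := fun f => by ext; simp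
      right_inv := fun g => by ext; simp }

theorem orderCount_of_isEmpty [IsEmpty β] (n : ℕ) : orderCount β n = 1 :=
  Nat.card_eq_one_iff_unique.2
    ⟨⟨fun _ _ => Subtype.ext (funext isEmptyElim)⟩, ⟨⟨isEmptyElim, fun x => isEmptyElim x⟩⟩⟩

theorem orderCount_one : orderCount β 1 = 1 :=
  Nat.card_eq_one_iff_unique.2
    ⟨⟨fun _ _ => Subtype.ext (funext fun _ => Subsingleton.elim _ _)⟩,
      ⟨⟨fun _ => 0, monotone_const⟩⟩⟩

theorem orderCount_top_lowerSet (n : ℕ) : orderCount (⊤ : LowerSet β) n = orderCount β n :=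
  orderCount_congr ((OrderIso.setCongr _ _ LowerSet.coe_top).trans (OrderIso.Set.univ)) n

noncomputable instance LowerSet.fintypeOfFinite [Finite β] : Fintype (LowerSet β) :=
  have : Finite (LowerSet β) := Finite.of_injective _ SetLike.coe_injective
  Fintype.ofFinite _

end OrderCount

section Splitting

variable {β : Type} (m n : ℕ)

open Classical in
noncomputable def glueFin (I : Set β) (g : I → Fin m) (h : ↥Iᶜ → Fin n) (x : β) : Fin (m + n) :=
  if hx : x ∈ I then Fin.castAdd n (g ⟨x, hx⟩) else Fin.natAdd m (h ⟨x, hx⟩)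

variable {m n} {I : Set β} {g : I → Fin m} {h : ↥Iᶜ → Fin n}

theorem val_glueFin_of_mem {x : β} (hx : x ∈ I) : (glueFin m n I g h x : ℕ) = g ⟨x, hx⟩ := by
  simp [glueFin, hx]

theorem val_glueFin_of_notMem {x : β} (hx : x ∉ I) :
    (glueFin m n I g h x : ℕ) = m + h ⟨x, hx⟩ := by
  simp [glueFin, hx]

theorem val_glueFin_lt_iff {x : β} : (glueFin m n I g h x : ℕ) < m ↔ x ∈ I := by
  by_cases hx : x ∈ I
  · simp [val_glueFin_of_mem hx, hx]
  · simp [val_glueFin_of_notMem hx, hx]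

theorem glueFin_monotone [PartialOrder β] (hI : IsLowerSet I) (hg : Monotone g) (hh : Monotone h) :
    Monotone (glueFin m n I g h) := by
  intro x y hxy
  rw [Fin.le_def]
  by_cases hy : y ∈ I
  · have hx : x ∈ I := hI hxy hy
    rw [val_glueFin_of_mem hx, val_glueFin_of_mem hy]
    exact hg (show (⟨x, hx⟩ : I) ≤ ⟨y, hy⟩ from hxy)
  · rw [val_glueFin_of_notMem hy]
    by_cases hx : x ∈ I
    · rw [val_glueFin_of_mem hx]
      omega
    · rw [val_glueFin_of_notMem hx]
      exact Nat.add_le_add_left (hh (show (⟨x, hx⟩ : ↥Iᶜ) ≤ ⟨y, hy⟩ from hxy)) m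

variable [PartialOrder β]

variable (β m n) in
noncomputable def glueMonotone :
    (Σ I : LowerSet β, {g : I → Fin m // Monotone g} × {h : ↥(I : Set β)ᶜ → Fin n // Monotone h})
      → {f : β → Fin (m + n) // Monotone f} :=
  fun z => ⟨glueFin m n z.1 z.2.1 z.2.2, glueFin_monotone z.1.lower z.2.1.2 z.2.2.2⟩

theorem glueMonotone_injective : Function.Injective (glueMonotone β m n) := by
  rintro ⟨I, ⟨g, hg⟩, ⟨h, hh⟩⟩ ⟨I', ⟨g', hg'⟩, ⟨h', hh'⟩⟩ heq
  have hval (x : β) : (glueFin m n I g h x : ℕ) = glueFin m n I' g' h' x :=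
    congrArg (fun f : {f : β → Fin (m + n) // Monotone f} => (f.1 x : ℕ)) heq
  obtain rfl : I = I' := LowerSet.ext <| Set.ext fun x => by
    rw [← val_glueFin_lt_iff (g := g) (h := h), ← val_glueFin_lt_iff (g := g') (h := h'), hval]
  obtain rfl : g = g' := funext fun x => Fin.ext <| by
    have := hval x
    rwa [val_glueFin_of_mem x.2, val_glueFin_of_mem x.2] at this
  obtain rfl : h = h' := funext fun x => Fin.ext <| by
    have := hval x
    rwa [val_glueFin_of_notMem x.2, val_glueFin_of_notMem x.2, Nat.add_left_cancel_iff] at this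
  rfl

theorem glueMonotone_surjective : Function.Surjective (glueMonotone β m n) := by
  rintro ⟨f, hf⟩
  let I : LowerSet β :=
    ⟨{x | (f x : ℕ) < m}, fun _ _ hyx hx => lt_of_le_of_lt (Fin.le_def.1 (hf hyx)) hx⟩
  have hlow (x : I) : (f x : ℕ) < m := x.2
  have hhigh (x : ↥(I : Set β)ᶜ) : m ≤ f x := not_lt.1 x.2
  refine ⟨⟨I, ⟨fun x => ⟨f x, hlow x⟩, fun x y hxy => hf hxy⟩,
    ⟨fun x => ⟨f x - m, by have := hhigh x; omega⟩, fun x y hxy => ?_⟩⟩, ?_⟩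
  · have : (f x : ℕ) ≤ f y := hf hxy
    exact Fin.le_def.2 (Nat.sub_le_sub_right this m)
  · refine Subtype.ext (funext fun x => Fin.ext ?_)
    by_cases hx : x ∈ I
    · exact val_glueFin_of_mem hx
    · have : m ≤ f x := not_lt.1 hx
      simp only [glueMonotone, val_glueFin_of_notMem hx]
      omega

theorem orderCount_add [Finite β] (m n : ℕ) :
    orderCount β (m + n) = ∑ I : LowerSet β, orderCount I m * orderCount ↥(I : Set β)ᶜ n := by
  rw [orderCount, ← Nat.card_congr (Equiv.ofBijective _
    ⟨glueMonotone_injective (β := β) (m := m) (n := n), glueMonotone_surjective⟩),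
    Nat.card_sigma]
  simp only [Nat.card_prod, orderCount]

end Splitting

section OrderPolynomial

theorem Polynomial.exists_eval_one_add_eq (R : ℚ[X]) :
    ∃ D : ℚ[X], ∀ x : ℚ, D.eval (1 + x) = D.eval x + R.eval x := by
  -- `B_{k+1}(1 + x) - B_{k+1}(x) = (k + 1) x^k` for the Bernoulli polynomials
  refine ⟨∑ k ∈ Finset.range (R.natDegree + 1), (R.coeff k / (k + 1)) • bernoulli (k + 1),
    fun x => ?_⟩
  simp only [eval_finsetSum, eval_smul, smul_eq_mul, bernoulli_eval_one_add, mul_add,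
    Finset.sum_add_distrib, eval_eq_sum_range (p := R) x]
  congr 1
  refine Finset.sum_congr rfl fun k _ => ?_
  push_cast
  field_simp

theorem Polynomial.eq_of_eval_natCast_eq {p q : ℚ[X]}
    (h : ∀ n : ℕ, p.eval (n : ℚ) = q.eval (n : ℚ)) : p = q :=
  eq_of_infinite_eval_eq p q (Set.infinite_of_injective_forall_mem Nat.cast_injective h)

theorem exists_eval_natCast_eq_of_sub_eq {f : ℕ → ℚ} (R : ℚ[X])
    (hf : ∀ n : ℕ, f (n + 1) - f n = R.eval (n : ℚ)) :
    ∃ p : ℚ[X], ∀ n : ℕ, p.eval (n : ℚ) = f n := by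
  obtain ⟨D, hD⟩ := R.exists_eval_one_add_eq
  refine ⟨D + C (f 0 - D.eval 0), fun n => ?_⟩
  induction n with
  | zero => simp
  | succ n ih =>
    have := hD n
    have := hf n
    simp only [eval_add, eval_C, Nat.cast_succ, add_comm (n : ℚ) 1] at ih ⊢
    linarith

variable {β : Type} [PartialOrder β]

theorem card_lowerSet_lt [Finite β] {I : LowerSet β} (hI : I ≠ ⊤) : Nat.card I < Nat.card β := by
  obtain ⟨x, hx⟩ : ∃ x, x ∉ I := by
    by_contra! h
    exact hI (LowerSet.ext (Set.eq_univ_of_forall h))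
  exact Finite.card_subtype_lt hx

theorem orderCount_succ [Finite β] (n : ℕ) :
    orderCount β (n + 1) = ∑ I : LowerSet β, orderCount I n := by
  simp [orderCount_add, orderCount_one]

theorem exists_orderPolynomial (β : Type) [Finite β] [PartialOrder β] :
    ∃ p : ℚ[X], ∀ n : ℕ, p.eval (n : ℚ) = orderCount β n := by
  induction h : Nat.card β using Nat.strong_induction_on generalizing β with
  | _ N ih =>
  classical
  have (I : LowerSet β) : ∃ p : ℚ[X], I ≠ ⊤ → ∀ n : ℕ, p.eval (n : ℚ) = orderCount I n := by
    by_cases hI : I = ⊤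
    · exact ⟨0, fun h => absurd hI h⟩
    · obtain ⟨p, hp⟩ := ih _ (h ▸ card_lowerSet_lt hI) I rfl
      exact ⟨p, fun _ => hp⟩
  choose q hq using this
  refine exists_eval_natCast_eq_of_sub_eq (∑ I ∈ Finset.univ.erase ⊤, q I) fun n => ?_
  rw [orderCount_succ, Nat.cast_sum, ← Finset.add_sum_erase _ _ (Finset.mem_univ ⊤),
    orderCount_top_lowerSet, add_sub_cancel_left, eval_finsetSum]
  exact Finset.sum_congr rfl fun I hI => (hq I (Finset.ne_of_mem_erase hI) n).symm

noncomputable def orderPolynomial (β : Type) [Finite β] [PartialOrder β] : ℚ[X] :=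
  (exists_orderPolynomial β).choose

variable [Finite β]

theorem eval_orderPolynomial (n : ℕ) : (orderPolynomial β).eval (n : ℚ) = orderCount β n :=
  (exists_orderPolynomial β).choose_spec n

theorem orderPolynomial_of_isEmpty [IsEmpty β] : orderPolynomial β = 1 :=
  eq_of_eval_natCast_eq fun n => by simp [eval_orderPolynomial, orderCount_of_isEmpty]

theorem taylor_orderPolynomial (m : ℕ) :
    taylor (m : ℚ) (orderPolynomial β)
      = ∑ I : LowerSet β, (orderCount I m : ℚ) • orderPolynomial ↥(I : Set β)ᶜ :=
  eq_of_eval_natCast_eq fun n => by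
    rw [taylor_eval, ← Nat.cast_add, eval_orderPolynomial, add_comm, orderCount_add,
      eval_finsetSum]
    simp [eval_orderPolynomial]

theorem derivative_orderPolynomial :
    derivative (orderPolynomial β)
      = ∑ I : LowerSet β, (orderPolynomial ↥(I : Set β)ᶜ).coeff 1 • orderPolynomial I :=
  eq_of_eval_natCast_eq fun m => by
    rw [← taylor_coeff_one, taylor_orderPolynomial, finsetSum_coeff, eval_finsetSum]
    simp [eval_orderPolynomial, mul_comm]

end OrderPolynomial


section Gaps

variable {α : Type} {r : ℕ} (a : Fin (r + 1) → α) (lam : α → ℤ)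

def gap (i : Fin r) : ℕ := (lam (a i.succ) - lam (a i.castSucc)).toNat

open Classical in
noncomputable def firstValueAbove (f : α → ℤ) (p : α) : Fin (r + 1) :=
  (Finset.univ.filter fun j => f p ≤ lam (a j)).inf id

variable {a lam} {f : α → ℤ} {p : α} {j : Fin (r + 1)}

theorem gap_cast (hlam : Monotone (lam ∘ a)) (i : Fin r) :
    (gap a lam i : ℤ) = lam (a i.succ) - lam (a i.castSucc) :=
  Int.toNat_of_nonneg (sub_nonneg.2 (hlam (Fin.castSucc_le_succ i)))

open Classical in
theorem firstValueAbove_le (h : f p ≤ lam (a j)) : firstValueAbove a lam f p ≤ j :=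
  Finset.inf_le (f := id) (Finset.mem_filter.2 ⟨Finset.mem_univ _, h⟩)

open Classical in
theorem le_lam_firstValueAbove (h : ∃ j, f p ≤ lam (a j)) :
    f p ≤ lam (a (firstValueAbove a lam f p)) := by
  obtain ⟨j, hj⟩ := h
  have hne : (Finset.univ.filter fun j => f p ≤ lam (a j)).Nonempty := ⟨j, by simpa using hj⟩
  obtain ⟨k, hk, hinf⟩ := Finset.exists_mem_eq_inf _ hne id
  rw [firstValueAbove, hinf]
  exact (Finset.mem_filter.1 hk).2

end Gaps

section Levels

variable {α : Type} [PartialOrder α] {r : ℕ} (a : Fin (r + 1) → α) (lam : α → ℤ)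

abbrev LevelMap := {τ : α → Fin (r + 1) // Monotone τ ∧ ∀ j, τ (a j) = j}

noncomputable instance [Finite α] : Fintype (LevelMap a) := Fintype.ofFinite _

/-- An extension of `lam` with levels `τ` takes its values on `block a τ i` freely in
`(lam (a i), lam (a (i + 1))]`; at every other point `p` it is forced to be `lam (a (τ p))`. -/
def block (τ : α → Fin (r + 1)) (i : Fin r) : Set α := {p | τ p = i.succ ∧ ¬ a i.succ ≤ p}

open Classical in
noncomputable def lastMarkBelow (p : α) : Fin (r + 1) :=
  (Finset.univ.filter fun j => a j ≤ p).sup id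

/-- The least `j` with `f p ≤ lam (a j)`, raised to the largest mark below `p`: otherwise a tie
`lam (a (j - 1)) = lam (a j)` would put the mark `a j` at level `j - 1`. -/
noncomputable def levelOf (f : α → ℤ) (p : α) : Fin (r + 1) :=
  max (lastMarkBelow a p) (firstValueAbove a lam f p)

variable {a lam}

open Classical in
/-- The value of `glue` at `p`, by cases on the level `j = τ p`; the proof of `τ p = j` is kept
so that `p` can be seen as a point of `block a τ i` when `j = i + 1`. -/
noncomputable def glueAt (τ : α → Fin (r + 1)) (s : ∀ i, block a τ i → Fin (gap a lam i))
    (p : α) : (j : Fin (r + 1)) → τ p = j → ℤ :=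
  Fin.cases (fun _ => lam (a 0)) fun i hi =>
    if h : a i.succ ≤ p then lam (a i.succ) else lam (a i.castSucc) + 1 + s i ⟨p, hi, h⟩

variable (lam) in
noncomputable def glue (τ : α → Fin (r + 1)) (s : ∀ i, block a τ i → Fin (gap a lam i))
    (p : α) : ℤ :=
  glueAt τ s p (τ p) rfl

section Glue

variable {τ : α → Fin (r + 1)} {s : ∀ i, block a τ i → Fin (gap a lam i)} {p : α}

theorem glue_eq_glueAt {j : Fin (r + 1)} (h : τ p = j) : glue lam τ s p = glueAt τ s p j h := by
  subst h
  rfl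

theorem glue_of_mem {i : Fin r} (hp : p ∈ block a τ i) :
    glue lam τ s p = lam (a i.castSucc) + 1 + s i ⟨p, hp⟩ := by
  rw [glue_eq_glueAt hp.1]
  exact dif_neg hp.2

theorem glue_of_le (h : a (τ p) ≤ p) : glue lam τ s p = lam (a (τ p)) := by
  rcases Fin.eq_zero_or_eq_succ (τ p) with h0 | ⟨i, hi⟩
  · rw [glue_eq_glueAt h0, h0]
    rfl
  · rw [glue_eq_glueAt hi, hi]
    rw [hi] at h
    exact dif_pos h

theorem glue_mark (hτ : ∀ j, τ (a j) = j) (j : Fin (r + 1)) : glue lam τ s (a j) = lam (a j) := by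
  rw [glue_of_le (by rw [hτ]), hτ]

theorem lt_glue_of_mem {i : Fin r} (hp : p ∈ block a τ i) :
    lam (a i.castSucc) < glue lam τ s p := by
  rw [glue_of_mem hp]
  omega

theorem glue_le_of_mem (hlam : Monotone (lam ∘ a)) {i : Fin r} (hp : p ∈ block a τ i) :
    glue lam τ s p ≤ lam (a i.succ) := by
  have := gap_cast hlam i
  have : ((s i ⟨p, hp⟩ : ℕ) : ℤ) < gap a lam i := by exact_mod_cast (s i ⟨p, hp⟩).isLt
  rw [glue_of_mem hp]
  omega

variable (hbot : ∀ p, ∃ j, a j ≤ p) (hτ : Monotone τ ∧ ∀ j, τ (a j) = j)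
include hbot hτ

theorem exists_mem_block_of_not_le (h : ¬ a (τ p) ≤ p) : ∃ i, p ∈ block a τ i := by
  obtain ⟨j, hj⟩ := hbot p
  have h0 : τ p ≠ 0 := fun h0 => by
    have : j ≤ τ p := hτ.2 j ▸ hτ.1 hj
    rw [h0, Fin.le_zero_iff] at this
    exact h (by rwa [h0, ← this])
  exact ⟨(τ p).pred h0, (Fin.succ_pred _ _).symm, by rwa [Fin.succ_pred]⟩

theorem glue_le (hlam : Monotone (lam ∘ a)) (p : α) : glue lam τ s p ≤ lam (a (τ p)) := by
  by_cases h : a (τ p) ≤ p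
  · exact (glue_of_le h).le
  · obtain ⟨i, hp⟩ := exists_mem_block_of_not_le hbot hτ h
    exact hp.1 ▸ glue_le_of_mem hlam hp

theorem le_glue_of_lt (hlam : Monotone (lam ∘ a)) {j : Fin (r + 1)} (hj : j < τ p) :
    lam (a j) ≤ glue lam τ s p := by
  by_cases h : a (τ p) ≤ p
  · exact (glue_of_le h).ge.trans' (hlam hj.le)
  · obtain ⟨i, hp⟩ := exists_mem_block_of_not_le hbot hτ h
    have : j ≤ i.castSucc := Fin.le_castSucc_iff.2 (hp.1 ▸ hj)
    exact (hlam this).trans (lt_glue_of_mem hp).le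

theorem glue_monotone (hlam : Monotone (lam ∘ a)) (hs : ∀ i, Monotone (s i)) :
    Monotone (glue lam τ s) := by
  intro p q hpq
  rcases (hτ.1 hpq).lt_or_eq with hlt | heq
  · exact (glue_le hbot hτ hlam p).trans (le_glue_of_lt hbot hτ hlam hlt)
  by_cases hq : a (τ q) ≤ q
  · rw [glue_of_le hq, ← heq]
    exact glue_le hbot hτ hlam p
  obtain ⟨i, hqi⟩ := exists_mem_block_of_not_le hbot hτ hq
  have hpi : p ∈ block a τ i := ⟨heq.trans hqi.1, fun h => hqi.2 (h.trans hpq)⟩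
  rw [glue_of_mem hpi, glue_of_mem hqi]
  have : (s i ⟨p, hpi⟩ : ℕ) ≤ s i ⟨q, hqi⟩ :=
    hs i (show (⟨p, hpi⟩ : block a τ i) ≤ ⟨q, hqi⟩ from hpq)
  omega

end Glue

section LevelOf

variable {f : α → ℤ} {p : α} {j : Fin (r + 1)}

open Classical in
theorem le_lastMarkBelow (h : a j ≤ p) : j ≤ lastMarkBelow a p :=
  Finset.le_sup (f := id) (Finset.mem_filter.2 ⟨Finset.mem_univ _, h⟩)

open Classical in
theorem mark_lastMarkBelow_le (h : ∃ j, a j ≤ p) : a (lastMarkBelow a p) ≤ p := by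
  obtain ⟨j, hj⟩ := h
  have hne : (Finset.univ.filter fun j => a j ≤ p).Nonempty := ⟨j, by simpa using hj⟩
  obtain ⟨k, hk, hsup⟩ := Finset.exists_mem_eq_sup _ hne id
  rw [lastMarkBelow, hsup]
  exact (Finset.mem_filter.1 hk).2

variable (hbot : ∀ p, ∃ j, a j ≤ p) (htop : ∀ p, ∃ j, p ≤ a j) (hlam : Monotone (lam ∘ a))
  (hf : Monotone f) (hfa : ∀ j, f (a j) = lam (a j))

include htop hf hfa in
theorem exists_ge_lam_mark (p : α) : ∃ j, f p ≤ lam (a j) :=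
  (htop p).imp fun j hj => (hf hj).trans (hfa j).le

include hbot htop hf hfa in
theorem levelOf_monotone : Monotone (levelOf a lam f) := fun p q hpq =>
  max_le_max (le_lastMarkBelow ((mark_lastMarkBelow_le (hbot p)).trans hpq))
    (firstValueAbove_le ((hf hpq).trans
      (le_lam_firstValueAbove (exists_ge_lam_mark htop hf hfa q))))

include hfa in
theorem levelOf_mark (hlab : ∀ j k, a k ≤ a j → k ≤ j) (j : Fin (r + 1)) :
    levelOf a lam f (a j) = j :=
  le_antisymm
    (max_le (hlab _ _ (mark_lastMarkBelow_le ⟨j, le_rfl⟩)) (firstValueAbove_le (hfa j).le))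
    ((le_lastMarkBelow le_rfl).trans (le_max_left _ _))

include htop hlam hf hfa in
theorem eq_lam_levelOf_of_le (h : a (levelOf a lam f p) ≤ p) :
    f p = lam (a (levelOf a lam f p)) :=
  le_antisymm ((le_lam_firstValueAbove (exists_ge_lam_mark htop hf hfa p)).trans
      (hlam (le_max_right _ _))) ((hfa _).symm.le.trans (hf h))

include hbot htop hf hfa in
theorem exists_levelOf_eq_succ_of_not_le (h : ¬ a (levelOf a lam f p) ≤ p) :
    ∃ i : Fin r, levelOf a lam f p = i.succ ∧ lam (a i.castSucc) < f p ∧ f p ≤ lam (a i.succ) := by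
  have hlt : lastMarkBelow a p < firstValueAbove a lam f p := by
    by_contra! hle
    exact h (by rw [levelOf, max_eq_left hle]; exact mark_lastMarkBelow_le (hbot p))
  have hlevel : levelOf a lam f p = firstValueAbove a lam f p := max_eq_right hlt.le
  have h0 : firstValueAbove a lam f p ≠ 0 := ((Fin.zero_le _).trans_lt hlt).ne'
  refine ⟨(firstValueAbove a lam f p).pred h0, by rw [hlevel, Fin.succ_pred], ?_, ?_⟩
  · by_contra! hle
    have := (firstValueAbove_le hle).trans_lt Fin.castSucc_lt_succ
    rw [Fin.succ_pred] at this
    exact this.false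
  · rw [Fin.succ_pred]
    exact le_lam_firstValueAbove (exists_ge_lam_mark htop hf hfa p)

end LevelOf

section Decomposition

variable (a lam)

abbrev ExtensionData :=
  Σ τ : LevelMap a, ∀ i, {s : block a τ.1 i → Fin (gap a lam i) // Monotone s}

abbrev Extension := {f : α → ℤ // Monotone f ∧ ∀ b ∈ Set.range a, f b = lam b}

variable {a lam} (hbot : ∀ p, ∃ j, a j ≤ p) (hlam : Monotone (lam ∘ a))

include hbot hlam in
theorem levelOf_glue {τ : α → Fin (r + 1)} (hτ : Monotone τ ∧ ∀ j, τ (a j) = j)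
    (s : ∀ i, block a τ i → Fin (gap a lam i)) :
    levelOf a lam (glue lam τ s) = τ := by
  funext p
  have hlast : lastMarkBelow a p ≤ τ p :=
    hτ.2 (lastMarkBelow a p) ▸ hτ.1 (mark_lastMarkBelow_le (hbot p))
  by_cases h : a (τ p) ≤ p
  · exact le_antisymm (max_le hlast (firstValueAbove_le (glue_of_le h).le))
      ((le_lastMarkBelow h).trans (le_max_left _ _))
  obtain ⟨i, hp⟩ := exists_mem_block_of_not_le hbot hτ h
  have hup := glue_le_of_mem (s := s) hlam hp
  have hfirst : firstValueAbove a lam (glue lam τ s) p = i.succ := by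
    refine le_antisymm (firstValueAbove_le hup) (not_lt.1 fun hlt => ?_)
    have := (le_lam_firstValueAbove ⟨_, hup⟩).trans (hlam (Fin.le_castSucc_iff.2 hlt))
    exact (lt_glue_of_mem hp).not_ge this
  rw [levelOf, hfirst, hp.1]
  exact max_eq_right (hp.1 ▸ hlast)

noncomputable def glueExtension : ExtensionData a lam → Extension a lam := fun z =>
  ⟨glue lam z.1.1 fun i => (z.2 i).1, glue_monotone hbot z.1.2 hlam fun i => (z.2 i).2,
    by rintro _ ⟨j, rfl⟩; exact glue_mark z.1.2.2 j⟩

theorem glueExtension_injective : Function.Injective (glueExtension hbot hlam) := by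
  rintro ⟨τ, s⟩ ⟨τ', s'⟩ h
  have hg : glue lam τ.1 (fun i => (s i).1) = glue lam τ'.1 (fun i => (s' i).1) :=
    congrArg Subtype.val h
  obtain rfl : τ = τ' := Subtype.ext <| by
    rw [← levelOf_glue hbot hlam τ.2, hg, levelOf_glue hbot hlam τ'.2]
  obtain rfl : s = s' := funext fun i => Subtype.ext <| funext fun y => Fin.ext <| by
    have := congrFun hg y
    rw [glue_of_mem y.2, glue_of_mem y.2] at this
    have : ((s i).1 ⟨y, y.2⟩ : ℤ) = (s' i).1 ⟨y, y.2⟩ := by omega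
    exact_mod_cast this
  rfl

theorem glueExtension_surjective (htop : ∀ p, ∃ j, p ≤ a j)
    (hlab : ∀ j k, a k ≤ a j → k ≤ j) : Function.Surjective (glueExtension hbot hlam) := by
  rintro ⟨f, hf, hfmark⟩
  have hfa (j : Fin (r + 1)) : f (a j) = lam (a j) := hfmark _ ⟨j, rfl⟩
  have hbounds {i : Fin r} {p : α} (hp : p ∈ block a (levelOf a lam f) i) :
      lam (a i.castSucc) < f p ∧ f p ≤ lam (a i.succ) := by
    obtain ⟨i', hi', hlt, hle⟩ :=
      exists_levelOf_eq_succ_of_not_le hbot htop hf hfa (hp.1 ▸ hp.2)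
    obtain rfl := Fin.succ_injective _ (hi'.symm.trans hp.1)
    exact ⟨hlt, hle⟩
  refine ⟨⟨⟨levelOf a lam f, levelOf_monotone hbot htop hf hfa, levelOf_mark hfa hlab⟩,
    fun i => ⟨fun p => ⟨(f p - lam (a i.castSucc) - 1).toNat, ?_⟩, fun p q hpq => ?_⟩⟩, ?_⟩
  · have := hbounds p.2
    have := gap_cast hlam i
    omega
  · have : f p ≤ f q := hf hpq
    simp only [Fin.mk_le_mk]
    omega
  · refine Subtype.ext (funext fun p => ?_)
    dsimp only [glueExtension]
    by_cases h : a (levelOf a lam f p) ≤ p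
    · exact (glue_of_le h).trans (eq_lam_levelOf_of_le htop hlam hf hfa h).symm
    · obtain ⟨i, hi, hlo, -⟩ := exists_levelOf_eq_succ_of_not_le hbot htop hf hfa h
      rw [glue_of_mem ⟨hi, hi ▸ h⟩]
      dsimp only
      omega

include hbot hlam in
theorem markedCount_eq_sum_prod [Finite α] (htop : ∀ p, ∃ j, p ≤ a j)
    (hlab : ∀ j k, a k ≤ a j → k ≤ j) :
    markedCount (Set.range a) lam
      = ∑ τ : LevelMap a, ∏ i, orderCount (block a τ.1 i) (gap a lam i) := by
  rw [markedCount, ← Nat.card_congr (Equiv.ofBijective _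
    ⟨glueExtension_injective hbot hlam, glueExtension_surjective hbot hlam htop hlab⟩),
    Nat.card_sigma]
  simp only [Nat.card_pi, orderCount]

end Decomposition

end Levels

section Family

variable (F : (α : Type) → [Finite α] → [PartialOrder α] → Prop)
  (hiso : ∀ (α β : Type) [Finite α] [PartialOrder α] [Finite β] [PartialOrder β],
    F α → Nonempty (α ≃o β) → F β)
  (hideal : ∀ (α : Type) [Finite α] [PartialOrder α], F α → ∀ I : Set α, IsLowerSet I → F I)
  (hfilter : ∀ (α : Type) [Finite α] [PartialOrder α], F α → ∀ I : Set α, IsUpperSet I → F I)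
  (hlin : ∀ (α : Type) [Finite α] [PartialOrder α], F α →
    ∀ Ω : ℚ[X], (∀ n : ℕ, 1 ≤ n → Ω.eval (n : ℚ) = orderCount α n) → 0 ≤ Ω.coeff 1)

include hideal hfilter hlin in
theorem orderPolynomial_coeff_nonneg (β : Type) [Finite β] [PartialOrder β] (hβ : F β) (k : ℕ) :
    0 ≤ (orderPolynomial β).coeff k := by
  induction h : Nat.card β using Nat.strong_induction_on generalizing β k with
  | _ N ih =>
  cases k with
  | zero =>
    rw [coeff_zero_eq_eval_zero, ← Nat.cast_zero, eval_orderPolynomial]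
    positivity
  | succ k =>
    have hderiv := congrArg (coeff · k) (derivative_orderPolynomial (β := β))
    simp only [coeff_derivative, finsetSum_coeff, coeff_smul, smul_eq_mul] at hderiv
    refine nonneg_of_mul_nonneg_left (hderiv ▸ Finset.sum_nonneg fun I _ => ?_) k.cast_add_one_pos
    by_cases hI : I = ⊤
    · subst hI
      have : IsEmpty ↥((⊤ : LowerSet β) : Set β)ᶜ := ⟨fun x => x.2 LowerSet.mem_top⟩
      simp [orderPolynomial_of_isEmpty, coeff_one]
    · exact mul_nonneg
        (hlin _ (hfilter β hβ _ I.lower.compl) _ fun n _ => eval_orderPolynomial n)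
        (ih _ (h ▸ card_lowerSet_lt hI) I (hideal β hβ I I.lower) k rfl)

include hiso hideal hfilter in
theorem mem_of_isUpperSet_inter_isLowerSet {α : Type} [Finite α] [PartialOrder α] (hα : F α)
    {U D : Set α} (hU : IsUpperSet U) (hD : IsLowerSet D) : F ↥(U ∩ D) := by
  have hD' : IsLowerSet {y : U | y.1 ∈ D} := fun _ _ hle hy => hD hle hy
  refine hiso _ _ (hideal _ (hfilter α hα U hU) _ hD') ⟨?_⟩
  exact
    { toFun := fun y => ⟨y.1.1, y.1.2, y.2⟩
      invFun := fun p => ⟨⟨p.1, p.2.1⟩, p.2.2⟩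
      left_inv := fun _ => rfl
      right_inv := fun _ => rfl
      map_rel_iff' := Iff.rfl }

include hiso hideal hfilter in
theorem mem_block {α : Type} [Finite α] [PartialOrder α] (hα : F α) {r : ℕ}
    (a : Fin (r + 1) → α) {τ : α → Fin (r + 1)} (hτ : Monotone τ) (i : Fin r) :
    F (block a τ i) := by
  have : block a τ i = {p | i.succ ≤ τ p} ∩ {p | τ p ≤ i.succ ∧ ¬ a i.succ ≤ p} := by
    ext p
    simp only [block, Set.mem_inter_iff, Set.mem_ofPred_eq, le_antisymm_iff]
    tauto
  rw [this]
  exact mem_of_isUpperSet_inter_isLowerSet F hiso hideal hfilter hα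
    (fun p q hpq hp => hp.trans (hτ hpq))
    (fun p q hqp hp => ⟨(hτ hqp).trans hp.1, fun h => hp.2 (h.trans hqp)⟩)

end Family

section NonnegCoeffs

variable (σ R : Type*) [CommSemiring R] [PartialOrder R] [IsOrderedRing R]

def MvPolynomial.nonnegCoeffs : Subsemiring (MvPolynomial σ R) where
  carrier := {p | ∀ m, 0 ≤ p.coeff m}
  mul_mem' hp hq m := by
    classical
    rw [MvPolynomial.coeff_mul]
    exact Finset.sum_nonneg fun x _ => mul_nonneg (hp _) (hq _)
  one_mem' m := by
    classical
    rw [MvPolynomial.coeff_one]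
    split_ifs <;> simp
  add_mem' hp hq m := by
    rw [MvPolynomial.coeff_add]; exact add_nonneg (hp m) (hq m)
  zero_mem' m := by simp

variable {σ R}

theorem Polynomial.toMvPolynomial_mem_nonnegCoeffs {p : R[X]} (hp : ∀ k, 0 ≤ p.coeff k) (i : σ) :
    p.toMvPolynomial i ∈ MvPolynomial.nonnegCoeffs σ R := by
  classical
  rw [p.as_sum_support_C_mul_X_pow, map_sum]
  refine Subsemiring.sum_mem _ fun k _ => ?_
  rw [map_mul, map_pow, toMvPolynomial_C, toMvPolynomial_X]
  refine Subsemiring.mul_mem _ (fun m => ?_) (Subsemiring.pow_mem _ (fun m => ?_) _)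
  · rw [MvPolynomial.coeff_C]; split_ifs <;> simp [hp]
  · rw [MvPolynomial.coeff_X]; split_ifs <;> simp

end NonnegCoeffs

/-- **Theorem (multivariate Ehrhart positivity for marked order polytopes).**
Let `F` be a family of finite posets closed under isomorphism, ideals and filters,
such that for every member the linear coefficient of the order polynomial is
nonnegative.  Then for any member `P`, any subposet `A ⊆ P` containing all minima
and maxima, and any natural labeling `A = {a_0, …, a_r}`, there is a polynomial
`f ∈ ℚ[t_1, …, t_r]` with nonnegative coefficients with
`Ω_{P,A}(λ) = f(λ(a_1) − λ(a_0), …, λ(a_r) − λ(a_{r−1}))`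
for every `λ : A → ℤ` with `λ(a_0) ≤ λ(a_1) ≤ ⋯ ≤ λ(a_r)`. -/
theorem marked_order_multivariate_positivity
    (F : (α : Type) → [Finite α] → [PartialOrder α] → Prop)
    (hiso : ∀ (α β : Type) [Finite α] [PartialOrder α] [Finite β] [PartialOrder β],
      F α → Nonempty (α ≃o β) → F β)
    (hideal : ∀ (α : Type) [Finite α] [PartialOrder α],
      F α → ∀ I : Set α, IsLowerSet I → F I)
    (hfilter : ∀ (α : Type) [Finite α] [PartialOrder α],
      F α → ∀ I : Set α, IsUpperSet I → F I)
    (hlin : ∀ (α : Type) [Finite α] [PartialOrder α], F α →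
      ∀ Ω : Polynomial ℚ, (∀ n : ℕ, 1 ≤ n → Ω.eval (n : ℚ) = orderCount α n) →
        0 ≤ Ω.coeff 1)
    (α : Type) [Finite α] [PartialOrder α] (hP : F α)
    (A : Set α) (hminmax : ∀ x : α, IsMin x ∨ IsMax x → x ∈ A)
    (r : ℕ) (a : Fin (r + 1) → α) (hinj : Function.Injective a)
    (hrange : Set.range a = A)
    (hnat : ∀ i j : Fin (r + 1), a i < a j → i < j) :
    ∃ f : MvPolynomial (Fin r) ℚ,
      (∀ m : Fin r →₀ ℕ, 0 ≤ f.coeff m) ∧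
      ∀ lam : α → ℤ, (∀ i j : Fin (r + 1), i ≤ j → lam (a i) ≤ lam (a j)) →
        (markedCount A lam : ℚ) =
          MvPolynomial.eval
            (fun i : Fin r => ((lam (a i.succ) : ℚ) - (lam (a i.castSucc) : ℚ))) f := by
  subst hrange
  have hlab (j k : Fin (r + 1)) (h : a k ≤ a j) : k ≤ j :=
    h.lt_or_eq.elim (fun h => (hnat k j h).le) fun h => (hinj h).le
  have hbot (p : α) : ∃ j, a j ≤ p := by
    obtain ⟨m, hm, hmin⟩ := Finite.exists_le_minimal (p := fun _ => True) (a := p) trivial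
    obtain ⟨j, rfl⟩ := hminmax m (.inl (minimal_true.1 hmin))
    exact ⟨j, hm⟩
  have htop (p : α) : ∃ j, p ≤ a j := by
    obtain ⟨m, hm, hmax⟩ := Finite.exists_le_maximal (p := fun _ => True) (a := p) trivial
    obtain ⟨j, rfl⟩ := hminmax m (.inr (maximal_true.1 hmax))
    exact ⟨j, hm⟩
  refine ⟨∑ τ : LevelMap a, ∏ i, (orderPolynomial (block a τ.1 i)).toMvPolynomial i,
    Subsemiring.sum_mem _ fun τ _ => Subsemiring.prod_mem _ fun i _ =>
      toMvPolynomial_mem_nonnegCoeffs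
        (orderPolynomial_coeff_nonneg F hideal hfilter hlin _
          (mem_block F hiso hideal hfilter hP a τ.2.1 i)) i,
    fun lam hlam => ?_⟩
  have hlam' : Monotone (lam ∘ a) := fun i j h => hlam i j h
  have hgap (i : Fin r) : ((lam (a i.succ) : ℚ) - lam (a i.castSucc)) = gap a lam i := by
    exact_mod_cast (gap_cast hlam' i).symm
  rw [markedCount_eq_sum_prod hbot hlam' htop hlab]
  simp [hgap, eval_orderPolynomial]
end

section
/- Let k ≥ 1, m ≥ 1 and y, z ∈ ℤ_{≥0}^k with z̃_i ≤ ỹ_i for all i ∈ [k]. Then the number of integer points in the m-generalized Pitman–Stanley polytope PS_k^m(y,z) equals the number of fillings of the cells of the skew shape (ỹ_k, …, ỹ_2, ỹ_1)/(z̃_k, …, z̃_2, z̃_1) with entries in {1, 2, …, m+1} that weakly increase along each row (left to right) and weakly increase down each column. Explicitly, the map sending an integer point (x_{i,j}) to the filling in which x_{i,j} − z̃_i is the number of entries at most j in the row of the shape corresponding to index i is a bijection. -/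
/-- The cells of the skew shape `(ỹ_k, …, ỹ_1)/(z̃_k, …, z̃_1)`, indexed as pairs
`(i, c)` with `z̃_i < c ≤ ỹ_i`; the row of the shape corresponding to index `i` is
row `k + 1 − i`. -/
def SkewCell (k : ℕ) (y z : Fin k → ℕ) : Type :=
  {p : Fin k × ℕ // ∑ l ∈ Finset.Iic p.1, z l < p.2 ∧ p.2 ≤ ∑ l ∈ Finset.Iic p.1, y l}

/-- A filling of the skew shape `(ỹ_k, …, ỹ_1)/(z̃_k, …, z̃_1)` with entries in
`{1, …, m + 1}` that weakly increases along each row (left to right) and weakly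
increases down each column.  (Going down the shape corresponds to decreasing
index `i`.) -/
def IsWeakFilling (k m : ℕ) (y z : Fin k → ℕ) (T : SkewCell k y z → ℕ) : Prop :=
  (∀ c, 1 ≤ T c ∧ T c ≤ m + 1) ∧
  (∀ c c' : SkewCell k y z, c.1.1 = c'.1.1 → c.1.2 ≤ c'.1.2 → T c ≤ T c') ∧
  (∀ c c' : SkewCell k y z, c.1.2 = c'.1.2 → c'.1.1 ≤ c.1.1 → T c ≤ T c')

namespace PSAux

variable {k m : ℕ}

/-- partial sum -/
abbrev Zn (z : Fin k → ℕ) (i : Fin k) : ℕ := ∑ l ∈ Finset.Iic i, z l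

/-- forward map: point to filling -/
def fwd (m : ℕ) (y z : Fin k → ℕ) (x : Fin k → Fin m → ℤ) (c : SkewCell k y z) : ℕ :=
  1 + (Finset.univ.filter (fun j : Fin m => x c.1.1 j < (c.1.2 : ℤ))).card

lemma fwd_mk (y z : Fin k → ℕ) (x : Fin k → Fin m → ℤ) (i : Fin k) (col : ℕ)
    (h : Zn z i < col ∧ col ≤ Zn y i) :
    fwd m y z x ⟨(i, col), h⟩ =
      1 + (Finset.univ.filter (fun j : Fin m => x i j < (col : ℤ))).card := rfl

/-- total extension of a filling -/
def Text (y z : Fin k → ℕ) (T : SkewCell k y z → ℕ) (i : Fin k) (col : ℕ) : ℕ :=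
  if h : Zn z i < col ∧ col ≤ Zn y i then T ⟨(i, col), h⟩ else 0

/-- backward map: filling to point -/
def bwd (m : ℕ) (y z : Fin k → ℕ) (T : SkewCell k y z → ℕ) (i : Fin k) (j : Fin m) : ℤ :=
  (Zn z i : ℤ) +
    (((Finset.Ioc (Zn z i) (Zn y i)).filter
      (fun col => Text y z T i col ≤ (j : ℕ) + 1)).card : ℤ)

lemma cell_eq (y z : Fin k → ℕ) (T : SkewCell k y z → ℕ) (c : SkewCell k y z)
    (i : Fin k) (hci : c.1.1 = i) : Text y z T i c.1.2 = T c := by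
  obtain ⟨⟨i', col⟩, hcell⟩ := c
  dsimp at hci; subst hci
  exact dif_pos hcell

lemma count_le_iff (x : Fin m → ℤ) (hx : Monotone x) (c : ℤ) (j : Fin m) :
    (Finset.univ.filter (fun j' => x j' < c)).card ≤ (j : ℕ) ↔ c ≤ x j := by
  constructor
  · intro h
    by_contra hc
    push_neg at hc
    have hsub : Finset.Iic j ⊆ Finset.univ.filter (fun j' => x j' < c) := by
      intro j' hj'
      simp only [Finset.mem_Iic] at hj'
      simp only [Finset.mem_filter, Finset.mem_univ, true_and]
      exact lt_of_le_of_lt (hx hj') hc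
    have := Finset.card_le_card hsub
    rw [Fin.card_Iic] at this
    omega
  · intro h
    have hsub : Finset.univ.filter (fun j' => x j' < c) ⊆ Finset.Iio j := by
      intro j' hj'
      simp only [Finset.mem_filter, Finset.mem_univ, true_and] at hj'
      simp only [Finset.mem_Iio]
      by_contra hge
      push_neg at hge
      exact absurd (hx hge) (not_le.mpr (lt_of_lt_of_le hj' h))
    have := Finset.card_le_card hsub
    rw [Fin.card_Iio] at this
    omega

lemma card_filter_val_lt (m a : ℕ) (ha : a ≤ m) :
    (Finset.univ.filter (fun j : Fin m => (j : ℕ) < a)).card = a := by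
  rw [← Finset.card_image_of_injective _ Fin.val_injective]
  have himg : (Finset.univ.filter (fun j : Fin m => (j : ℕ) < a)).image Fin.val
      = Finset.range a := by
    ext n
    simp only [Finset.mem_image, Finset.mem_filter, Finset.mem_univ, true_and,
      Finset.mem_range]
    constructor
    · rintro ⟨j, hj, rfl⟩; exact hj
    · intro hn; exact ⟨⟨n, lt_of_lt_of_le hn ha⟩, hn, rfl⟩
  rw [himg, Finset.card_range]

lemma bwd_le_iff (y z : Fin k → ℕ) (T : SkewCell k y z → ℕ)
    (hT : IsWeakFilling k m y z T) (i : Fin k) (col : ℕ)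
    (h : Zn z i < col ∧ col ≤ Zn y i) (j : Fin m) :
    (col : ℤ) ≤ bwd m y z T i j ↔ T ⟨(i, col), h⟩ ≤ (j : ℕ) + 1 := by
  constructor
  · intro hle
    by_contra hnot
    push_neg at hnot
    have hsub : (Finset.Ioc (Zn z i) (Zn y i)).filter
        (fun c => Text y z T i c ≤ (j : ℕ) + 1) ⊆ Finset.Ioc (Zn z i) (col - 1) := by
      intro c hc
      simp only [Finset.mem_filter, Finset.mem_Ioc] at hc ⊢
      obtain ⟨⟨h1c, h2c⟩, hTc⟩ := hc
      refine ⟨h1c, ?_⟩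
      by_contra hcc
      push_neg at hcc
      have hcol_le : col ≤ c := by omega
      have hmono := hT.2.1 ⟨(i, col), h⟩ ⟨(i, c), ⟨h1c, h2c⟩⟩ rfl hcol_le
      rw [cell_eq y z T ⟨(i, c), ⟨h1c, h2c⟩⟩ i rfl] at hTc
      omega
    have hcard := Finset.card_le_card hsub
    rw [Nat.card_Ioc] at hcard
    have hbwd := hle
    unfold bwd at hbwd
    omega
  · intro hle
    have hsub : Finset.Ioc (Zn z i) col ⊆ (Finset.Ioc (Zn z i) (Zn y i)).filter
        (fun c => Text y z T i c ≤ (j : ℕ) + 1) := by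
      intro c hc
      simp only [Finset.mem_Ioc] at hc
      have hcell : Zn z i < c ∧ c ≤ Zn y i := ⟨hc.1, le_trans hc.2 h.2⟩
      simp only [Finset.mem_filter, Finset.mem_Ioc]
      refine ⟨hcell, ?_⟩
      rw [cell_eq y z T ⟨(i, c), hcell⟩ i rfl]
      exact le_trans (hT.2.1 ⟨(i, c), hcell⟩ ⟨(i, col), h⟩ rfl hc.2) hle
    have hcard := Finset.card_le_card hsub
    rw [Nat.card_Ioc] at hcard
    unfold bwd
    omega

lemma idx_mono (x : Fin k → Fin m → ℤ)
    (h3 : ∀ (i : Fin k) (hi : (i : ℕ) + 1 < k) (j : Fin m), x i j ≤ x ⟨(i : ℕ) + 1, hi⟩ j)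
    (j : Fin m) : ∀ (i i' : Fin k), i ≤ i' → x i j ≤ x i' j := by
  have key : ∀ n (hn : n < k) (i : Fin k), (i : ℕ) ≤ n → x i j ≤ x ⟨n, hn⟩ j := by
    intro n
    induction n with
    | zero =>
      intro hn i hi
      have : i = ⟨0, hn⟩ := Fin.ext (Nat.le_zero.mp hi)
      rw [this]
    | succ n ih =>
      intro hn i hi
      rcases Nat.lt_or_ge (i : ℕ) (n + 1) with h | h
      · have hn' : n < k := lt_trans (Nat.lt_succ_self n) hn
        calc x i j ≤ x ⟨n, hn'⟩ j := ih hn' i (Nat.lt_succ_iff.mp h)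
          _ ≤ x ⟨n + 1, hn⟩ j := h3 ⟨n, hn'⟩ hn j
      · have : i = ⟨n + 1, hn⟩ := Fin.ext (le_antisymm hi h)
        rw [this]
  intro i i' hii
  have := key (i' : ℕ) i'.2 i hii
  simpa using this

lemma fwd_filling (y z : Fin k → ℕ) (x : Fin k → Fin m → ℤ)
    (h1 : ∀ i, Monotone (x i))
    (h3 : ∀ (i : Fin k) (hi : (i : ℕ) + 1 < k) (j : Fin m), x i j ≤ x ⟨(i : ℕ) + 1, hi⟩ j) :
    IsWeakFilling k m y z (fwd m y z x) := by
  refine ⟨fun c => ⟨Nat.le_add_right 1 _, ?_⟩, ?_, ?_⟩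
  · have : (Finset.univ.filter (fun j : Fin m => x c.1.1 j < (c.1.2 : ℤ))).card ≤ m := by
      calc _ ≤ (Finset.univ : Finset (Fin m)).card := Finset.card_filter_le _ _
        _ = m := by simp
    unfold fwd; omega
  · intro c c' hii hcc
    obtain ⟨⟨i1, a⟩, hc⟩ := c
    obtain ⟨⟨i2, b⟩, hc'⟩ := c'
    dsimp at hii hcc; subst hii
    rw [fwd_mk, fwd_mk]
    have : (Finset.univ.filter (fun j : Fin m => x i1 j < (a : ℤ))) ⊆
        (Finset.univ.filter (fun j : Fin m => x i1 j < (b : ℤ))) := by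
      intro j hj
      simp only [Finset.mem_filter, Finset.mem_univ, true_and] at hj ⊢
      exact lt_of_lt_of_le hj (by exact_mod_cast hcc)
    have := Finset.card_le_card this
    omega
  · intro c c' hcc hii
    obtain ⟨⟨i1, a⟩, hc⟩ := c
    obtain ⟨⟨i2, b⟩, hc'⟩ := c'
    dsimp at hii hcc; subst hcc
    rw [fwd_mk, fwd_mk]
    have hx : ∀ j, x i2 j ≤ x i1 j := fun j => idx_mono x h3 j i2 i1 hii
    have : (Finset.univ.filter (fun j : Fin m => x i1 j < (a : ℤ))) ⊆
        (Finset.univ.filter (fun j : Fin m => x i2 j < (a : ℤ))) := by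
      intro j hj
      simp only [Finset.mem_filter, Finset.mem_univ, true_and] at hj ⊢
      exact lt_of_le_of_lt (hx j) hj
    have := Finset.card_le_card this
    omega

lemma bwd_mono (y z : Fin k → ℕ) (T : SkewCell k y z → ℕ) (i : Fin k) :
    Monotone (bwd m y z T i) := by
  intro j j' hjj
  unfold bwd
  have : (Finset.Ioc (Zn z i) (Zn y i)).filter (fun col => Text y z T i col ≤ (j : ℕ) + 1)
      ⊆ (Finset.Ioc (Zn z i) (Zn y i)).filter (fun col => Text y z T i col ≤ (j' : ℕ) + 1) := by
    intro c hc
    simp only [Finset.mem_filter] at hc ⊢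
    exact ⟨hc.1, le_trans hc.2 (by have : (j : ℕ) ≤ (j' : ℕ) := hjj; omega)⟩
  have := Finset.card_le_card this
  omega

lemma bwd_bounds (y z : Fin k → ℕ) (hzy : ∀ i : Fin k, Zn z i ≤ Zn y i)
    (T : SkewCell k y z → ℕ) (i : Fin k) (j : Fin m) :
    (Zn z i : ℤ) ≤ bwd m y z T i j ∧ bwd m y z T i j ≤ (Zn y i : ℤ) := by
  constructor
  · unfold bwd; omega
  · have hle : ((Finset.Ioc (Zn z i) (Zn y i)).filter
        (fun col => Text y z T i col ≤ (j : ℕ) + 1)).card ≤ Zn y i - Zn z i := by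
      calc _ ≤ (Finset.Ioc (Zn z i) (Zn y i)).card := Finset.card_filter_le _ _
        _ = Zn y i - Zn z i := Nat.card_Ioc _ _
    have := hzy i
    unfold bwd
    omega

lemma bwd_step (y z : Fin k → ℕ) (hzy : ∀ i : Fin k, Zn z i ≤ Zn y i)
    (T : SkewCell k y z → ℕ) (hT : IsWeakFilling k m y z T)
    (i : Fin k) (hi : (i : ℕ) + 1 < k) (j : Fin m) :
    bwd m y z T i j ≤ bwd m y z T ⟨(i : ℕ) + 1, hi⟩ j := by
  set i' : Fin k := ⟨(i : ℕ) + 1, hi⟩ with hi'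
  have hii' : i ≤ i' := by
    rw [Fin.le_def]; exact Nat.le_succ _
  have hZmono : Zn z i ≤ Zn z i' :=
    Finset.sum_le_sum_of_subset (Finset.Iic_subset_Iic.mpr hii')
  have hYmono : Zn y i ≤ Zn y i' :=
    Finset.sum_le_sum_of_subset (Finset.Iic_subset_Iic.mpr hii')
  set N := ((Finset.Ioc (Zn z i) (Zn y i)).filter
      (fun col => Text y z T i col ≤ (j : ℕ) + 1)).card with hN
  have hbwd : bwd m y z T i j = (Zn z i : ℤ) + N := rfl
  have hlow' : (Zn z i' : ℤ) ≤ bwd m y z T i' j := (bwd_bounds y z hzy T i' j).1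
  rcases Nat.eq_zero_or_pos N with h0 | hpos
  · rw [hbwd, h0]
    simp only [Nat.cast_zero, add_zero]
    omega
  · set col := Zn z i + N with hcol
    have hNle : N ≤ Zn y i - Zn z i := by
      rw [hN]
      calc _ ≤ (Finset.Ioc (Zn z i) (Zn y i)).card := Finset.card_filter_le _ _
        _ = Zn y i - Zn z i := Nat.card_Ioc _ _
    have hzyi := hzy i
    have hcell : Zn z i < col ∧ col ≤ Zn y i := ⟨by omega, by omega⟩
    have hbwdcol : bwd m y z T i j = (col : ℤ) := by rw [hbwd, hcol]; push_cast; ring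
    have hTle : T ⟨(i, col), hcell⟩ ≤ (j : ℕ) + 1 := by
      rw [← bwd_le_iff y z T hT i col hcell j, hbwdcol]
    by_cases hc2 : col ≤ Zn z i'
    · rw [hbwdcol]
      have : (col : ℤ) ≤ (Zn z i' : ℤ) := by exact_mod_cast hc2
      omega
    · have hcell' : Zn z i' < col ∧ col ≤ Zn y i' := ⟨by omega, le_trans hcell.2 hYmono⟩
      have hTT : T ⟨(i', col), hcell'⟩ ≤ T ⟨(i, col), hcell⟩ :=
        hT.2.2 ⟨(i', col), hcell'⟩ ⟨(i, col), hcell⟩ rfl hii'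
      have := (bwd_le_iff y z T hT i' col hcell' j).mpr (le_trans hTT hTle)
      rw [hbwdcol]
      exact this

lemma bwd_fwd (y z : Fin k → ℕ) (x : Fin k → Fin m → ℤ)
    (h1 : ∀ i, Monotone (x i))
    (h2 : ∀ (i : Fin k) (j : Fin m),
      (Zn z i : ℤ) ≤ x i j ∧ x i j ≤ (Zn y i : ℤ))
    (i : Fin k) (j : Fin m) :
    bwd m y z (fwd m y z x) i j = x i j := by
  have hZ : (Zn z i : ℤ) ≤ x i j := (h2 i j).1
  have hY : x i j ≤ (Zn y i : ℤ) := (h2 i j).2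
  have hpos : 0 ≤ x i j := le_trans (by positivity) hZ
  set v := (x i j).toNat with hv
  have hxv : x i j = (v : ℤ) := (Int.toNat_of_nonneg hpos).symm
  have hZv : Zn z i ≤ v := by omega
  have hYv : v ≤ Zn y i := by omega
  have hfilter : (Finset.Ioc (Zn z i) (Zn y i)).filter
      (fun col => Text y z (fwd m y z x) i col ≤ (j : ℕ) + 1) = Finset.Ioc (Zn z i) v := by
    ext c
    simp only [Finset.mem_filter, Finset.mem_Ioc]
    constructor
    · rintro ⟨⟨h1c, h2c⟩, hTc⟩
      refine ⟨h1c, ?_⟩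
      have hcell : Zn z i < c ∧ c ≤ Zn y i := ⟨h1c, h2c⟩
      rw [cell_eq y z (fwd m y z x) ⟨(i, c), hcell⟩ i rfl, fwd_mk] at hTc
      have hcard : (Finset.univ.filter (fun j' => x i j' < (c : ℤ))).card ≤ (j : ℕ) := by
        omega
      have := (count_le_iff (x i) (h1 i) c j).mp hcard
      omega
    · rintro ⟨h1c, h2c⟩
      have hcell : Zn z i < c ∧ c ≤ Zn y i := ⟨h1c, le_trans h2c hYv⟩
      refine ⟨hcell, ?_⟩
      rw [cell_eq y z (fwd m y z x) ⟨(i, c), hcell⟩ i rfl, fwd_mk]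
      have hxc : (c : ℤ) ≤ x i j := by omega
      have := (count_le_iff (x i) (h1 i) c j).mpr hxc
      omega
  unfold bwd
  rw [hfilter, Nat.card_Ioc]
  omega

lemma fwd_bwd (y z : Fin k → ℕ) (hzy : ∀ i : Fin k, Zn z i ≤ Zn y i)
    (T : SkewCell k y z → ℕ) (hT : IsWeakFilling k m y z T) (c : SkewCell k y z) :
    fwd m y z (bwd m y z T) c = T c := by
  obtain ⟨⟨i, col⟩, hcell⟩ := c
  set t := T ⟨(i, col), hcell⟩ with ht
  have ht1 : 1 ≤ t := (hT.1 _).1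
  have ht2 : t ≤ m + 1 := (hT.1 _).2
  have hkey : ∀ j : Fin m, (bwd m y z T i j < (col : ℤ)) ↔ ((j : ℕ) + 1 < t) := by
    intro j
    rw [← not_le, ← not_le]
    exact not_congr (bwd_le_iff y z T hT i col hcell j)
  have hset : (Finset.univ.filter (fun j : Fin m => bwd m y z T i j < (col : ℤ)))
      = Finset.univ.filter (fun j : Fin m => (j : ℕ) < t - 1) := by
    ext j
    simp only [Finset.mem_filter, Finset.mem_univ, true_and, hkey j]
    omega
  show 1 + (Finset.univ.filter (fun j : Fin m => bwd m y z T i j < (col : ℤ))).card = t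
  rw [hset, card_filter_val_lt m (t - 1) (by omega)]
  omega

def rowEquiv (y z : Fin k → ℕ) (T : SkewCell k y z → ℕ) (i : Fin k) (a : ℕ) :
    {c : SkewCell k y z // c.1.1 = i ∧ T c ≤ a} ≃
    {col // col ∈ (Finset.Ioc (Zn z i) (Zn y i)).filter
      (fun col => Text y z T i col ≤ a)} where
  toFun c := ⟨c.1.1.2, by
    obtain ⟨⟨⟨i', col⟩, hcell⟩, hi, hTc⟩ := c
    dsimp at hi ⊢; subst hi
    rw [Finset.mem_filter, Finset.mem_Ioc]
    refine ⟨⟨hcell.1, hcell.2⟩, ?_⟩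
    rw [cell_eq y z T ⟨(i', col), hcell⟩ i' rfl]
    exact hTc⟩
  invFun p := ⟨⟨(i, p.1), by
      have := p.2
      rw [Finset.mem_filter, Finset.mem_Ioc] at this
      exact this.1⟩, rfl, by
      have := p.2
      rw [Finset.mem_filter, Finset.mem_Ioc] at this
      have h2 := this.2
      rwa [cell_eq y z T ⟨(i, p.1), this.1⟩ i rfl] at h2⟩
  left_inv c := by
    obtain ⟨⟨⟨i', col⟩, hcell⟩, hi, hTc⟩ := c
    dsimp at hi; subst hi
    rfl
  right_inv p := rfl

lemma card_row (y z : Fin k → ℕ) (T : SkewCell k y z → ℕ) (i : Fin k) (a : ℕ) :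
    Nat.card {c : SkewCell k y z // c.1.1 = i ∧ T c ≤ a} =
    ((Finset.Ioc (Zn z i) (Zn y i)).filter (fun col => Text y z T i col ≤ a)).card := by
  rw [← Nat.card_eq_finsetCard]
  exact Nat.card_congr (rowEquiv y z T i a)

end PSAux


open PSAux in
/-- **Theorem.** The integer points of the `m`-generalized Pitman–Stanley polytope
`PS_k^m(y, z)` are in bijection with the fillings of the skew shape
`(ỹ_k, …, ỹ_1)/(z̃_k, …, z̃_1)` with entries in `{1, …, m + 1}` weakly increasing
along rows and weakly increasing down columns; explicitly, the bijection sends an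
integer point `(x_{i,j})` to the filling in which `x_{i,j} − z̃_i` is the number of
entries at most `j` in the row corresponding to index `i`.  In particular the two
sets have the same cardinality. -/
theorem pitmanStanley_points_biject_with_weak_fillings
    (k m : ℕ) (hk : 0 < k) (hm : 0 < m) (y z : Fin k → ℕ)
    (hzy : ∀ i : Fin k, ∑ l ∈ Finset.Iic i, z l ≤ ∑ l ∈ Finset.Iic i, y l) :
    ∃ Φ : {x : Fin k → Fin m → ℤ //
            (∀ i : Fin k, Monotone (x i)) ∧
            (∀ (i : Fin k) (j : Fin m),
              (∑ l ∈ Finset.Iic i, (z l : ℤ)) ≤ x i j ∧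
              x i j ≤ ∑ l ∈ Finset.Iic i, (y l : ℤ)) ∧
            (∀ (i : Fin k) (hi : (i : ℕ) + 1 < k) (j : Fin m),
              x i j ≤ x ⟨(i : ℕ) + 1, hi⟩ j)} ≃
          {T : SkewCell k y z → ℕ // IsWeakFilling k m y z T},
      ∀ (x : {x : Fin k → Fin m → ℤ //
            (∀ i : Fin k, Monotone (x i)) ∧
            (∀ (i : Fin k) (j : Fin m),
              (∑ l ∈ Finset.Iic i, (z l : ℤ)) ≤ x i j ∧
              x i j ≤ ∑ l ∈ Finset.Iic i, (y l : ℤ)) ∧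
            (∀ (i : Fin k) (hi : (i : ℕ) + 1 < k) (j : Fin m),
              x i j ≤ x ⟨(i : ℕ) + 1, hi⟩ j)})
        (i : Fin k) (j : Fin m),
        x.1 i j = (∑ l ∈ Finset.Iic i, (z l : ℤ)) +
          Nat.card {c : SkewCell k y z // c.1.1 = i ∧ (Φ x).1 c ≤ (j : ℕ) + 1} := by
  have hcast : ∀ (w : Fin k → ℕ) (i : Fin k),
      (∑ l ∈ Finset.Iic i, (w l : ℤ)) = ((Zn w i : ℕ) : ℤ) := by
    intro w i; rw [Nat.cast_sum]
  have hbounds' : ∀ (x : Fin k → Fin m → ℤ),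
      (∀ (i : Fin k) (j : Fin m),
        (∑ l ∈ Finset.Iic i, (z l : ℤ)) ≤ x i j ∧
        x i j ≤ ∑ l ∈ Finset.Iic i, (y l : ℤ)) ↔
      (∀ (i : Fin k) (j : Fin m),
        ((Zn z i : ℕ) : ℤ) ≤ x i j ∧ x i j ≤ ((Zn y i : ℕ) : ℤ)) := by
    intro x
    constructor <;> intro h i j <;> have := h i j <;>
      simp only [hcast] at this ⊢ <;> exact this
  refine ⟨⟨fun x => ⟨fwd m y z x.1, fwd_filling y z x.1 x.2.1 x.2.2.2⟩,
    fun T => ⟨bwd m y z T.1,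
      fun i => bwd_mono y z T.1 i,
      fun i j => by
        have := bwd_bounds y z hzy T.1 i j
        simp only [hcast]
        exact this,
      fun i hi j => bwd_step y z hzy T.1 T.2 i hi j⟩,
    fun x => Subtype.ext (funext fun i => funext fun j =>
      bwd_fwd y z x.1 x.2.1 ((hbounds' x.1).mp x.2.2.1) i j),
    fun T => Subtype.ext (funext fun c => fwd_bwd y z hzy T.1 T.2 c)⟩, ?_⟩
  intro x i j
  simp only [Equiv.coe_fn_mk]
  rw [card_row y z (fwd m y z x.1) i ((j : ℕ) + 1)]
  have h := bwd_fwd y z x.1 x.2.1 ((hbounds' x.1).mp x.2.2.1) i j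
  rw [← h]
  rw [hcast]
  rfl
end
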